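/- arXiv:2205.02707 — 3 statements merged into one kernel-verified Lean document; each statement's English description precedes it below -/
import Mathlib

section
/- Let V be a real vector space, E and F real inner product spaces, and D : V → E, J : V → F, M : V → F linear maps such that there is a constant C ≥ 0 with ‖Mτ‖_F ≤ C·‖Dτ‖_E for all τ ∈ V. For a real parameter 𝚊, define the symmetric bilinear form c_h(σ,τ) := ⟨Dσ, Dτ⟩_E + 𝚊·⟨Jσ, Jτ⟩_F − ⟨Mσ, Jτ⟩_F − ⟨Mτ, Jσ⟩_F. If 𝚊 ≥ 2C² + 1/2, then c_h(τ,τ) ≥ (1/2)·(‖Dτ‖_E² + ‖Jτ‖_F²) for all τ ∈ V. -/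
open scoped RealInnerProductSpace

/-- Abstract form of Proposition 3.3: coercivity of the interior-penalty
bilinear form `c_h` for penalty parameter `𝚊 ≥ 2C² + 1/2`. -/
theorem stmt7 {V E F : Type*} [AddCommGroup V] [Module ℝ V]
    [NormedAddCommGroup E] [InnerProductSpace ℝ E]
    [NormedAddCommGroup F] [InnerProductSpace ℝ F]
    (D : V →ₗ[ℝ] E) (J M : V →ₗ[ℝ] F)
    (C : ℝ) (hC : 0 ≤ C) (hM : ∀ τ, ‖M τ‖ ≤ C * ‖D τ‖)
    (a : ℝ) (ha : 2 * C ^ 2 + 1 / 2 ≤ a)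
    (ch : V → V → ℝ)
    (hch : ∀ σ τ, ch σ τ =
      ⟪D σ, D τ⟫ + a * ⟪J σ, J τ⟫ - ⟪M σ, J τ⟫ - ⟪M τ, J σ⟫) :
    ∀ τ, (1 / 2) * (‖D τ‖ ^ 2 + ‖J τ‖ ^ 2) ≤ ch τ τ := by
  intro τ
  have h1 : ⟪D τ, D τ⟫ = ‖D τ‖ ^ 2 := real_inner_self_eq_norm_sq _
  have h2 : ⟪J τ, J τ⟫ = ‖J τ‖ ^ 2 := real_inner_self_eq_norm_sq _
  have h3 : |⟪M τ, J τ⟫| ≤ ‖M τ‖ * ‖J τ‖ := abs_real_inner_le_norm _ _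
  have h4 := hM τ
  have h5 : ‖M τ‖ * ‖J τ‖ ≤ C * ‖D τ‖ * ‖J τ‖ :=
    mul_le_mul_of_nonneg_right h4 (norm_nonneg _)
  have h6 : ⟪M τ, J τ⟫ ≤ C * ‖D τ‖ * ‖J τ‖ := (le_abs_self _).trans (h3.trans h5)
  rw [hch, h1, h2]
  nlinarith [norm_nonneg (D τ), norm_nonneg (J τ), sq_nonneg (‖D τ‖ - 2 * C * ‖J τ‖), sq_nonneg (‖J τ‖)]
end

section
/- Let V be a real vector space, E and F real inner product spaces, and D : V → E, J : V → F, M : V → F linear maps such that there is a constant C ≥ 0 with ‖Mτ‖_F ≤ C·‖Dτ‖_E for all τ ∈ V. For a real parameter 𝚊 ≥ 2C² + 1/2, define c_h(σ,τ) := ⟨Dσ, Dτ⟩_E + 𝚊·⟨Jσ, Jτ⟩_F − ⟨Mσ, Jτ⟩_F − ⟨Mτ, Jσ⟩_F. Then for every τ ∈ V one has c_h(τ,τ) = 0 if and only if Dτ = 0 and Jτ = 0. -/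
open scoped RealInnerProductSpace

/-- Characterization (4.3) of the discrete kernel: under the stability
assumption `𝚊 ≥ 2C² + 1/2`, `c_h(τ,τ) = 0` iff `Dτ = 0` and `Jτ = 0`. -/
theorem stmt8 {V E F : Type*} [AddCommGroup V] [Module ℝ V]
    [NormedAddCommGroup E] [InnerProductSpace ℝ E]
    [NormedAddCommGroup F] [InnerProductSpace ℝ F]
    (D : V →ₗ[ℝ] E) (J M : V →ₗ[ℝ] F)
    (C : ℝ) (hC : 0 ≤ C) (hM : ∀ τ, ‖M τ‖ ≤ C * ‖D τ‖)
    (a : ℝ) (ha : 2 * C ^ 2 + 1 / 2 ≤ a)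
    (ch : V → V → ℝ)
    (hch : ∀ σ τ, ch σ τ =
      ⟪D σ, D τ⟫ + a * ⟪J σ, J τ⟫ - ⟪M σ, J τ⟫ - ⟪M τ, J σ⟫) :
    ∀ τ, ch τ τ = 0 ↔ D τ = 0 ∧ J τ = 0 := by
  intro τ
  constructor
  · intro h0
    have hch' := hch τ τ
    rw [real_inner_self_eq_norm_sq (D τ), real_inner_self_eq_norm_sq (J τ)] at hch'
    -- bound on the cross term
    have h1 : ⟪M τ, J τ⟫ ≤ ‖M τ‖ * ‖J τ‖ := real_inner_le_norm _ _
    have h2 : ‖M τ‖ * ‖J τ‖ ≤ C * ‖D τ‖ * ‖J τ‖ :=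
      mul_le_mul_of_nonneg_right (hM τ) (norm_nonneg _)
    have h3 : 2 * (C * ‖D τ‖ * ‖J τ‖) ≤ (1/2) * ‖D τ‖ ^ 2 + 2 * C ^ 2 * ‖J τ‖ ^ 2 := by
      nlinarith [sq_nonneg (‖D τ‖ - 2 * C * ‖J τ‖)]
    have key : (1/2) * ‖D τ‖ ^ 2 + (a - 2 * C ^ 2) * ‖J τ‖ ^ 2 ≤ 0 := by
      nlinarith [h0, hch']
    have hD2 : ‖D τ‖ ^ 2 = 0 := by
      nlinarith [sq_nonneg ‖D τ‖, sq_nonneg ‖J τ‖]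
    have hJ2 : ‖J τ‖ ^ 2 = 0 := by
      nlinarith [sq_nonneg ‖D τ‖, sq_nonneg ‖J τ‖]
    constructor
    · exact norm_eq_zero.mp (pow_eq_zero_iff two_ne_zero |>.mp hD2)
    · exact norm_eq_zero.mp (pow_eq_zero_iff two_ne_zero |>.mp hJ2)
  · rintro ⟨hD, hJ⟩
    rw [hch, hD, hJ]
    simp
end

section
/- Let X be a real inner product space with inner product a, and let A and c be symmetric positive-semidefinite bilinear forms on X with a(u,v) = A(u,v) + c(u,v) for all u, v ∈ X. Let K_h ⊆ K be linear subspaces of X such that c(w,w) = 0 for every w ∈ K. Let τ, p, p_h, q ∈ X satisfy: τ − p ∈ K and A(p, w) = 0 for all w ∈ K; τ − p_h ∈ K_h and A(p_h, w) = 0 for all w ∈ K_h; and τ − q ∈ K_h. Then √(a(p − p_h, p − p_h)) ≤ 2·√(A(p − q, p − q)). -/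
open scoped RealInnerProductSpace

/-- Abstract core of Lemma 4.7: bound on the distance between the continuous
and discrete projections, `‖p - p_h‖_a ≤ 2‖p - q‖_A`. -/
theorem stmt11 {X : Type*} [NormedAddCommGroup X] [InnerProductSpace ℝ X]
    (A c : X →ₗ[ℝ] X →ₗ[ℝ] ℝ)
    (hAsymm : ∀ u v, A u v = A v u) (hApsd : ∀ u, 0 ≤ A u u)
    (hcsymm : ∀ u v, c u v = c v u) (hcpsd : ∀ u, 0 ≤ c u u)
    (hsum : ∀ u v : X, ⟪u, v⟫ = A u v + c u v)
    (K Kh : Submodule ℝ X) (hKhK : Kh ≤ K)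
    (hcK : ∀ w ∈ K, c w w = 0)
    (τ p ph q : X)
    (hpK : τ - p ∈ K) (hpA : ∀ w ∈ K, A p w = 0)
    (hphKh : τ - ph ∈ Kh) (hphA : ∀ w ∈ Kh, A ph w = 0)
    (hqKh : τ - q ∈ Kh) :
    Real.sqrt ⟪p - ph, p - ph⟫ ≤ 2 * Real.sqrt (A (p - q) (p - q)) := by
  -- q - ph ∈ Kh
  have hvKh : q - ph ∈ Kh := by
    have h := Kh.sub_mem hphKh hqKh
    have : (τ - ph) - (τ - q) = q - ph := by abel
    rwa [this] at h
  -- p - ph ∈ K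
  have hpphK : p - ph ∈ K := by
    have h := K.sub_mem (hKhK hphKh) hpK
    have : (τ - ph) - (τ - p) = p - ph := by abel
    rwa [this] at h
  have hA1 : A p (q - ph) = 0 := hpA _ (hKhK hvKh)
  have hA2 : A ph (q - ph) = 0 := hphA _ hvKh
  -- key: A (p-q) (q-ph) = - A (q-ph) (q-ph)
  have key : A (p - q) (q - ph) = - A (q - ph) (q - ph) := by
    have e1 : A (p - q) (q - ph) = A p (q - ph) - A q (q - ph) := by
      simp [map_sub]; ring
    have e2 : A (q - ph) (q - ph) = A q (q - ph) - A ph (q - ph) := by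
      simp [map_sub]; ring
    rw [e1, e2, hA1, hA2]; ring
  have huv : p - ph = (p - q) + (q - ph) := by abel
  have expand : A (p - ph) (p - ph)
      = A (p - q) (p - q) - A (q - ph) (q - ph) := by
    rw [huv]
    have e : A ((p - q) + (q - ph)) ((p - q) + (q - ph))
        = A (p - q) (p - q) + A (p - q) (q - ph) + A (q - ph) (p - q)
          + A (q - ph) (q - ph) := by
      simp [map_add]; ring
    rw [e, hAsymm (q - ph) (p - q), key]; ring
  have hc0 : c (p - ph) (p - ph) = 0 := hcK _ hpphK
  have hinner : ⟪p - ph, p - ph⟫ = A (p - ph) (p - ph) := by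
    rw [hsum, hc0, add_zero]
  rw [hinner, expand]
  have h2 : A (p - q) (p - q) - A (q - ph) (q - ph) ≤ A (p - q) (p - q) := by
    linarith [hApsd (q - ph)]
  calc Real.sqrt (A (p - q) (p - q) - A (q - ph) (q - ph))
      ≤ Real.sqrt (A (p - q) (p - q)) := Real.sqrt_le_sqrt h2
    _ ≤ 2 * Real.sqrt (A (p - q) (p - q)) := by
        nlinarith [Real.sqrt_nonneg (A (p - q) (p - q))]
end
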